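/- arXiv:2105.05157 — 7 statements merged into one kernel-verified Lean document; each statement's English description precedes it below -/
import Mathlib

section
/- Let β̂_{s,1j} and β̂_{p,1j} denote the j-th components of the straPP and power-prior posterior-mean estimators, and suppose the percent bias PercentBias(β̂_{p,1j}) = (E[β̂_{p,1j}] − β₁ⱼ)/β₁ⱼ is nonzero and β₁ⱼ ≠ 0. Then under the normal–normal data-generating distribution with the straPP transformation assumption β₀ = (σ₀/σ₁)β₁, the mean-squared error satisfies MSE(β̂_{s,1j}) ≤ MSE(β̂_{p,1j}) if and only if (Var(β̂_{s,1j}) − Var(β̂_{p,1j})) / (PercentBias(β̂_{p,1j}))² ≤ β₁ⱼ², where MSE(T) = E[(T − β₁ⱼ)²] and Var is the variance under the data-generating distribution. -/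
/-!
Both estimators are linear in the data `Y`, so they have finite second moments and their means
are the estimators evaluated at `E[Y] = (X₀β₀, X₁β₁)`. When `β₀ = (σ₀/σ₁)β₁`, the straPP
estimator evaluated at this mean gives back `β₁` exactly: the factor `σ₀/σ₁` cancels the
mismatched weight `a₀/(σ₀σ₁)`. So straPP is unbiased and its MSE is its variance, while the
power-prior MSE is its variance plus `bias² = (PercentBias · β₁ⱼ)²`. Dividing by
`PercentBias² > 0` turns `MSE_s ≤ MSE_p` into the stated inequality.
-/

open MeasureTheory ProbabilityTheory Matrix

noncomputable section

/-- The normal–normal data-generating distribution: the product probability measure on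
`(Fin n₀ → ℝ) × (Fin n₁ → ℝ)` under which the components `Y₀ i ~ N((X₀ β₀) i, σ₀²)` and
`Y₁ i ~ N((X₁ β₁) i, σ₁²)` are all independent. -/
def dataMeasure {n₀ n₁ p : ℕ} (X₀ : Matrix (Fin n₀) (Fin p) ℝ)
    (X₁ : Matrix (Fin n₁) (Fin p) ℝ) (σ₀ σ₁ : ℝ) (β₀ β₁ : Fin p → ℝ) :
    Measure ((Fin n₀ → ℝ) × (Fin n₁ → ℝ)) :=
  (Measure.pi fun i => gaussianReal (X₀.mulVec β₀ i) ((σ₀ ^ 2).toNNReal)).prod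
    (Measure.pi fun i => gaussianReal (X₁.mulVec β₁ i) ((σ₁ ^ 2).toNNReal))

/-- The straPP posterior-mean estimator
`β̂_s = Σ_s((1/σ₁²)X₁ᵀY₁ + (a₀/(σ₀σ₁))X₀ᵀY₀)` with `Σ_s = σ₁²(X₁ᵀX₁ + a₀X₀ᵀX₀)⁻¹`. -/
def strapEst {n₀ n₁ p : ℕ} (X₀ : Matrix (Fin n₀) (Fin p) ℝ)
    (X₁ : Matrix (Fin n₁) (Fin p) ℝ) (σ₀ σ₁ a₀ : ℝ)
    (y : (Fin n₀ → ℝ) × (Fin n₁ → ℝ)) : Fin p → ℝ :=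
  (σ₁ ^ 2 • (X₁ᵀ * X₁ + a₀ • (X₀ᵀ * X₀))⁻¹).mulVec
    ((1 / σ₁ ^ 2) • X₁ᵀ.mulVec y.2 + (a₀ / (σ₀ * σ₁)) • X₀ᵀ.mulVec y.1)

/-- The power-prior posterior-mean estimator
`β̂_p = Σ_p((1/σ₁²)X₁ᵀY₁ + (a₀/σ₀²)X₀ᵀY₀)` with
`Σ_p = ((1/σ₁²)X₁ᵀX₁ + (a₀/σ₀²)X₀ᵀX₀)⁻¹`. -/
def ppEst {n₀ n₁ p : ℕ} (X₀ : Matrix (Fin n₀) (Fin p) ℝ)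
    (X₁ : Matrix (Fin n₁) (Fin p) ℝ) (σ₀ σ₁ a₀ : ℝ)
    (y : (Fin n₀ → ℝ) × (Fin n₁ → ℝ)) : Fin p → ℝ :=
  ((1 / σ₁ ^ 2) • (X₁ᵀ * X₁) + (a₀ / σ₀ ^ 2) • (X₀ᵀ * X₀))⁻¹.mulVec
    ((1 / σ₁ ^ 2) • X₁ᵀ.mulVec y.2 + (a₀ / σ₀ ^ 2) • X₀ᵀ.mulVec y.1)

open scoped NNReal ENNReal

lemma integral_sub_sq_eq_variance_add_sq {Ω : Type*} [MeasurableSpace Ω] {μ : Measure Ω}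
    [IsProbabilityMeasure μ] {f : Ω → ℝ} (hf : MemLp f 2 μ) (c : ℝ) :
    ∫ ω, (f ω - c) ^ 2 ∂μ = variance f μ + (∫ ω, f ω ∂μ - c) ^ 2 := by
  have h := variance_eq_sub (μ := μ) (X := fun ω => f ω - c) (hf.sub (memLp_const c))
  rw [variance_sub_const hf.aestronglyMeasurable,
    integral_sub (hf.integrable one_le_two) (integrable_const c)] at h
  simp only [Pi.pow_apply, integral_const, probReal_univ, smul_eq_mul, one_mul] at h
  linarith

lemma le_add_sq_iff_sub_div_sq_le {u v b c : ℝ} (h : b / c ≠ 0) :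
    u ≤ v + b ^ 2 ↔ (u - v) / (b / c) ^ 2 ≤ c ^ 2 := by
  have hc : c ≠ 0 := by rintro rfl; simp at h
  rw [div_le_iff₀ (by positivity), ← mul_pow, mul_div_cancel₀ b hc, sub_le_iff_le_add']

section Moments

variable {q : ℝ≥0∞}

section Pi

variable {ι : Type*} [Fintype ι] {μ : ι → Measure ℝ} [∀ i, IsProbabilityMeasure (μ i)]

lemma memLp_id_pi (h : ∀ i, MemLp id q (μ i)) : MemLp id q (Measure.pi μ) :=
  MemLp.of_eval fun i => (h i).comp_measurePreserving (measurePreserving_eval μ i)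

lemma integral_id_pi (h : ∀ i, Integrable id (μ i)) :
    ∫ x, x ∂Measure.pi μ = fun i => ∫ x, x ∂μ i := by
  funext i
  rw [eval_integral fun i => integrable_eval (h i), integral_eval]

end Pi

section Prod

variable {E F : Type*} [NormedAddCommGroup E] [MeasurableSpace E] [NormedAddCommGroup F]
  [MeasurableSpace F] {ν₁ : Measure E} {ν₂ : Measure F}
  [IsProbabilityMeasure ν₁] [IsProbabilityMeasure ν₂]

lemma memLp_id_prod (h₁ : MemLp id q ν₁) (h₂ : MemLp id q ν₂) : MemLp id q (ν₁.prod ν₂) :=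
  MemLp.of_fst_snd ⟨h₁.comp_measurePreserving measurePreserving_fst,
    h₂.comp_measurePreserving measurePreserving_snd⟩

lemma integral_id_prod [NormedSpace ℝ E] [CompleteSpace E] [NormedSpace ℝ F] [CompleteSpace F]
    (h₁ : Integrable id ν₁) (h₂ : Integrable id ν₂) :
    ∫ z, z ∂ν₁.prod ν₂ = (∫ x, x ∂ν₁, ∫ y, y ∂ν₂) := by
  have h : Integrable (fun z => z) (ν₁.prod ν₂) := by
    rw [← memLp_one_iff_integrable] at *
    exact memLp_id_prod h₁ h₂
  ext
  · rw [fst_integral h, integral_fun_fst fun x : E => x]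
    simp
  · rw [snd_integral h, integral_fun_snd fun y : F => y]
    simp

end Prod

end Moments

section DataMeasure

variable {n₀ n₁ p : ℕ} (X₀ : Matrix (Fin n₀) (Fin p) ℝ) (X₁ : Matrix (Fin n₁) (Fin p) ℝ)
  (σ₀ σ₁ : ℝ) (β₀ β₁ : Fin p → ℝ)

instance : IsProbabilityMeasure (dataMeasure X₀ X₁ σ₀ σ₁ β₀ β₁) := by
  unfold dataMeasure; infer_instance

lemma memLp_id_dataMeasure {q : ℝ≥0∞} (hq : q ≠ ∞) :
    MemLp id q (dataMeasure X₀ X₁ σ₀ σ₁ β₀ β₁) :=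
  memLp_id_prod (memLp_id_pi fun _ => memLp_id_gaussianReal' q hq)
    (memLp_id_pi fun _ => memLp_id_gaussianReal' q hq)

lemma integral_id_dataMeasure :
    ∫ y, y ∂dataMeasure X₀ X₁ σ₀ σ₁ β₀ β₁ = (X₀ *ᵥ β₀, X₁ *ᵥ β₁) := by
  simp only [dataMeasure]
  have hpi {n : ℕ} (m : Fin n → ℝ) (v : ℝ≥0) :
      Integrable id (Measure.pi fun i => gaussianReal (m i) v) :=
    memLp_one_iff_integrable.1 (memLp_id_pi fun _ => memLp_id_gaussianReal' 1 ENNReal.one_ne_top)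
  rw [integral_id_prod (hpi _ _) (hpi _ _), integral_id_pi fun _ => IsGaussian.integrable_id,
    integral_id_pi fun _ => IsGaussian.integrable_id]
  simp only [integral_id_gaussianReal]

lemma memLp_linearMap_dataMeasure (L : ((Fin n₀ → ℝ) × (Fin n₁ → ℝ)) →ₗ[ℝ] ℝ) {q : ℝ≥0∞}
    (hq : q ≠ ∞) : MemLp L q (dataMeasure X₀ X₁ σ₀ σ₁ β₀ β₁) :=
  L.toContinuousLinearMap.comp_memLp' (memLp_id_dataMeasure X₀ X₁ σ₀ σ₁ β₀ β₁ hq)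

lemma integral_linearMap_dataMeasure (L : ((Fin n₀ → ℝ) × (Fin n₁ → ℝ)) →ₗ[ℝ] ℝ) :
    ∫ y, L y ∂dataMeasure X₀ X₁ σ₀ σ₁ β₀ β₁ = L (X₀ *ᵥ β₀, X₁ *ᵥ β₁) := by
  rw [← integral_id_dataMeasure, ← L.coe_toContinuousLinearMap',
    ContinuousLinearMap.integral_comp_id_comm]
  exact memLp_one_iff_integrable.1 (memLp_id_dataMeasure X₀ X₁ σ₀ σ₁ β₀ β₁ ENNReal.one_ne_top)

end DataMeasure

/-- `strapEst` and `ppEst` are, definitionally, instances of this map; the moment lemmas for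
linear maps apply to them through that. -/
def linearEstimator {n₀ n₁ p : ℕ} (X₀ : Matrix (Fin n₀) (Fin p) ℝ)
    (X₁ : Matrix (Fin n₁) (Fin p) ℝ) (M : Matrix (Fin p) (Fin p) ℝ) (c₀ c₁ : ℝ) :
    ((Fin n₀ → ℝ) × (Fin n₁ → ℝ)) →ₗ[ℝ] (Fin p → ℝ) :=
  M.mulVecLin ∘ₗ
    (c₁ • X₁ᵀ.mulVecLin ∘ₗ LinearMap.snd ℝ _ _ + c₀ • X₀ᵀ.mulVecLin ∘ₗ LinearMap.fst ℝ _ _)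

section Estimators

variable {n₀ n₁ p : ℕ} (X₀ : Matrix (Fin n₀) (Fin p) ℝ) (X₁ : Matrix (Fin n₁) (Fin p) ℝ)
  (σ₀ σ₁ a₀ : ℝ) (β₀ β₁ : Fin p → ℝ) (j : Fin p)

lemma memLp_strapEst_apply :
    MemLp (fun y => strapEst X₀ X₁ σ₀ σ₁ a₀ y j) 2 (dataMeasure X₀ X₁ σ₀ σ₁ β₀ β₁) :=
  memLp_linearMap_dataMeasure X₀ X₁ σ₀ σ₁ β₀ β₁ (LinearMap.proj j ∘ₗ
    linearEstimator X₀ X₁ (σ₁ ^ 2 • (X₁ᵀ * X₁ + a₀ • (X₀ᵀ * X₀))⁻¹) (a₀ / (σ₀ * σ₁)) (1 / σ₁ ^ 2))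
    ENNReal.ofNat_ne_top

lemma memLp_ppEst_apply :
    MemLp (fun y => ppEst X₀ X₁ σ₀ σ₁ a₀ y j) 2 (dataMeasure X₀ X₁ σ₀ σ₁ β₀ β₁) :=
  memLp_linearMap_dataMeasure X₀ X₁ σ₀ σ₁ β₀ β₁ (LinearMap.proj j ∘ₗ
    linearEstimator X₀ X₁ ((1 / σ₁ ^ 2) • (X₁ᵀ * X₁) + (a₀ / σ₀ ^ 2) • (X₀ᵀ * X₀))⁻¹
      (a₀ / σ₀ ^ 2) (1 / σ₁ ^ 2)) ENNReal.ofNat_ne_top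

variable {σ₀ σ₁ a₀}

lemma strapEst_mulVec (hσ₀ : σ₀ ≠ 0) (hσ₁ : σ₁ ≠ 0)
    (hs : IsUnit (X₁ᵀ * X₁ + a₀ • (X₀ᵀ * X₀)).det) :
    strapEst X₀ X₁ σ₀ σ₁ a₀ (X₀ *ᵥ ((σ₀ / σ₁) • β₁), X₁ *ᵥ β₁) = β₁ := by
  have hw : (1 / σ₁ ^ 2) • X₁ᵀ *ᵥ X₁ *ᵥ β₁ + (a₀ / (σ₀ * σ₁)) • X₀ᵀ *ᵥ X₀ *ᵥ ((σ₀ / σ₁) • β₁)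
      = (1 / σ₁ ^ 2) • (X₁ᵀ * X₁ + a₀ • (X₀ᵀ * X₀)) *ᵥ β₁ := by
    rw [mulVec_smul, mulVec_smul, mulVec_mulVec, mulVec_mulVec, add_mulVec, smul_mulVec,
      smul_add, smul_smul, smul_smul,
      show a₀ / (σ₀ * σ₁) * (σ₀ / σ₁) = 1 / σ₁ ^ 2 * a₀ by field_simp]
  unfold strapEst
  rw [hw, mulVec_smul, smul_mulVec, smul_smul, mulVec_mulVec, nonsing_inv_mul _ hs, one_mulVec,
    one_div_mul_cancel (pow_ne_zero 2 hσ₁), one_smul]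

lemma integral_strapEst_apply (hσ₀ : σ₀ ≠ 0) (hσ₁ : σ₁ ≠ 0)
    (hs : IsUnit (X₁ᵀ * X₁ + a₀ • (X₀ᵀ * X₀)).det) :
    ∫ y, strapEst X₀ X₁ σ₀ σ₁ a₀ y j ∂dataMeasure X₀ X₁ σ₀ σ₁ ((σ₀ / σ₁) • β₁) β₁ = β₁ j :=
  (integral_linearMap_dataMeasure X₀ X₁ σ₀ σ₁ _ β₁ (LinearMap.proj j ∘ₗ
    linearEstimator X₀ X₁ (σ₁ ^ 2 • (X₁ᵀ * X₁ + a₀ • (X₀ᵀ * X₀))⁻¹) (a₀ / (σ₀ * σ₁))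
      (1 / σ₁ ^ 2))).trans (congrFun (strapEst_mulVec X₀ X₁ β₁ hσ₀ hσ₁ hs) j)

end Estimators

theorem strapp_mse_le_pp_mse_iff_general {n₀ n₁ p : ℕ}
    (X₀ : Matrix (Fin n₀) (Fin p) ℝ) (X₁ : Matrix (Fin n₁) (Fin p) ℝ)
    (σ₀ σ₁ a₀ : ℝ) (hσ₀ : 0 < σ₀) (hσ₁ : 0 < σ₁)
    (hs : IsUnit (X₁ᵀ * X₁ + a₀ • (X₀ᵀ * X₀)).det)
    (β₁ : Fin p → ℝ) (j : Fin p)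
    (μ : Measure ((Fin n₀ → ℝ) × (Fin n₁ → ℝ)))
    (hμ : μ = dataMeasure X₀ X₁ σ₀ σ₁ ((σ₀ / σ₁) • β₁) β₁)
    (hpb : (∫ y, ppEst X₀ X₁ σ₀ σ₁ a₀ y j ∂μ - β₁ j) / β₁ j ≠ 0) :
    (∫ y, (strapEst X₀ X₁ σ₀ σ₁ a₀ y j - β₁ j) ^ 2 ∂μ
        ≤ ∫ y, (ppEst X₀ X₁ σ₀ σ₁ a₀ y j - β₁ j) ^ 2 ∂μ) ↔
      (variance (fun y => strapEst X₀ X₁ σ₀ σ₁ a₀ y j) μ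
          - variance (fun y => ppEst X₀ X₁ σ₀ σ₁ a₀ y j) μ)
        / ((∫ y, ppEst X₀ X₁ σ₀ σ₁ a₀ y j ∂μ - β₁ j) / β₁ j) ^ 2
        ≤ (β₁ j) ^ 2 := by
  subst hμ
  rw [integral_sub_sq_eq_variance_add_sq (memLp_strapEst_apply X₀ X₁ σ₀ σ₁ a₀ _ β₁ j),
    integral_sub_sq_eq_variance_add_sq (memLp_ppEst_apply X₀ X₁ σ₀ σ₁ a₀ _ β₁ j),
    integral_strapEst_apply X₀ X₁ β₁ j hσ₀.ne' hσ₁.ne' hs, sub_self, sq, zero_mul, add_zero]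
  exact le_add_sq_iff_sub_div_sq_le hpb

/-- Theorem 1 of the paper: under the normal–normal data-generating distribution with the
straPP transformation assumption `β₀ = (σ₀/σ₁)β₁`, if `β₁ⱼ ≠ 0` and the percent bias of the
power-prior estimator is nonzero, then `MSE(β̂_{s,1j}) ≤ MSE(β̂_{p,1j})` if and only if
`(Var(β̂_{s,1j}) − Var(β̂_{p,1j})) / (PercentBias(β̂_{p,1j}))² ≤ β₁ⱼ²`. -/
theorem strapp_mse_le_pp_mse_iff {n₀ n₁ p : ℕ}
    (X₀ : Matrix (Fin n₀) (Fin p) ℝ) (X₁ : Matrix (Fin n₁) (Fin p) ℝ)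
    (σ₀ σ₁ a₀ : ℝ) (hσ₀ : 0 < σ₀) (hσ₁ : 0 < σ₁) (ha₀ : 0 < a₀) (ha₀' : a₀ ≤ 1)
    (hs : IsUnit (X₁ᵀ * X₁ + a₀ • (X₀ᵀ * X₀)).det)
    (hp : IsUnit ((1 / σ₁ ^ 2) • (X₁ᵀ * X₁) + (a₀ / σ₀ ^ 2) • (X₀ᵀ * X₀)).det)
    (β₁ : Fin p → ℝ) (j : Fin p) (hβ : β₁ j ≠ 0)
    (μ : Measure ((Fin n₀ → ℝ) × (Fin n₁ → ℝ)))
    (hμ : μ = dataMeasure X₀ X₁ σ₀ σ₁ ((σ₀ / σ₁) • β₁) β₁)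
    (hpb : (∫ y, ppEst X₀ X₁ σ₀ σ₁ a₀ y j ∂μ - β₁ j) / β₁ j ≠ 0) :
    (∫ y, (strapEst X₀ X₁ σ₀ σ₁ a₀ y j - β₁ j) ^ 2 ∂μ
        ≤ ∫ y, (ppEst X₀ X₁ σ₀ σ₁ a₀ y j - β₁ j) ^ 2 ∂μ) ↔
      (variance (fun y => strapEst X₀ X₁ σ₀ σ₁ a₀ y j) μ
          - variance (fun y => ppEst X₀ X₁ σ₀ σ₁ a₀ y j) μ)
        / ((∫ y, ppEst X₀ X₁ σ₀ σ₁ a₀ y j ∂μ - β₁ j) / β₁ j) ^ 2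
        ≤ (β₁ j) ^ 2 :=
  strapp_mse_le_pp_mse_iff_general X₀ X₁ σ₀ σ₁ a₀ hσ₀ hσ₁ hs β₁ j μ hμ hpb
end
end

section
/- Under the normal–normal data-generating distribution with the straPP transformation assumption β₀ = (σ₀/σ₁)β₁, the straPP posterior-mean estimator is unbiased: E[β̂_s] = β₁, i.e., Bias(β̂_s) = E[β̂_s] − β₁ = 0. -/
open MeasureTheory ProbabilityTheory Matrix
open scoped NNReal ENNReal

noncomputable section

section Aux

open Real

lemma aux_integral_mul_exp (b : ℝ) : ∫ x : ℝ, x * rexp (-b * x ^ 2) = 0 := by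
  have h := MeasureTheory.integral_neg_eq_self (fun x : ℝ => x * rexp (-b * x ^ 2)) volume
  simp only [neg_sq, neg_mul, MeasureTheory.integral_neg] at h
  have h2 : ∫ x : ℝ, x * rexp (-b * x ^ 2) = ∫ x : ℝ, x * rexp (-(b * x ^ 2)) := by
    simp only [neg_mul]
  rw [h2]
  linarith

lemma aux_integrable_mul_pdf (m : ℝ) {v : ℝ≥0} (hv : v ≠ 0) :
    MeasureTheory.Integrable (fun x => gaussianPDFReal m v x * x) := by
  have hv' : 0 < (v : ℝ) := by positivity
  have hb : 0 < (2 * (v : ℝ))⁻¹ := by positivity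
  have hG : MeasureTheory.Integrable
      (fun x : ℝ => gaussianPDFReal m v (x + m) * (x + m)) := by
    have h1 : MeasureTheory.Integrable
        (fun x : ℝ => (√(2 * π * v))⁻¹ * (x * rexp (-(2 * (v : ℝ))⁻¹ * x ^ 2))) :=
      (integrable_mul_exp_neg_mul_sq hb).const_mul _
    have h2 : MeasureTheory.Integrable
        (fun x : ℝ => ((√(2 * π * v))⁻¹ * m) * rexp (-(2 * (v : ℝ))⁻¹ * x ^ 2)) :=
      (integrable_exp_neg_mul_sq hb).const_mul _
    refine (h1.add h2).congr (Filter.Eventually.of_forall fun x => ?_)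
    simp only [Pi.add_apply, gaussianPDFReal, add_sub_cancel_right]
    rw [show -x ^ 2 / (2 * (v : ℝ)) = -(2 * (v : ℝ))⁻¹ * x ^ 2 by field_simp]
    ring
  have := ((MeasureTheory.measurePreserving_add_right MeasureTheory.volume
      (-m)).integrable_comp_emb (MeasurableEquiv.addRight (-m)).measurableEmbedding).2 hG
  refine this.congr (Filter.Eventually.of_forall fun x => ?_)
  simp [Function.comp]

lemma aux_integral_mul_pdf (m : ℝ) {v : ℝ≥0} (hv : v ≠ 0) :
    ∫ x, gaussianPDFReal m v x * x = m := by
  have hv' : 0 < (v : ℝ) := by positivity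
  have hb : 0 < (2 * (v : ℝ))⁻¹ := by positivity
  have key : ∀ x : ℝ, gaussianPDFReal m v (x + m) * (x + m)
      = (√(2 * π * v))⁻¹ * (x * rexp (-(2 * (v : ℝ))⁻¹ * x ^ 2))
        + ((√(2 * π * v))⁻¹ * m) * rexp (-(2 * (v : ℝ))⁻¹ * x ^ 2) := by
    intro x
    simp only [gaussianPDFReal, add_sub_cancel_right]
    rw [show -x ^ 2 / (2 * (v : ℝ)) = -(2 * (v : ℝ))⁻¹ * x ^ 2 by field_simp]
    ring
  have hexp : (√(2 * π * v))⁻¹ * ∫ x : ℝ, rexp (-(2 * (v : ℝ))⁻¹ * x ^ 2) = 1 := by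
    have h1 := integral_gaussianPDFReal_eq_one m hv
    rw [← MeasureTheory.integral_add_right_eq_self (gaussianPDFReal m v) m] at h1
    have : ∀ x : ℝ, gaussianPDFReal m v (x + m)
        = (√(2 * π * v))⁻¹ * rexp (-(2 * (v : ℝ))⁻¹ * x ^ 2) := by
      intro x
      simp only [gaussianPDFReal, add_sub_cancel_right]
      rw [show -x ^ 2 / (2 * (v : ℝ)) = -(2 * (v : ℝ))⁻¹ * x ^ 2 by field_simp]
    rw [MeasureTheory.integral_congr_ae (Filter.Eventually.of_forall this),
      MeasureTheory.integral_const_mul] at h1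
    exact h1
  have h1 : MeasureTheory.Integrable
      (fun x : ℝ => (√(2 * π * v))⁻¹ * (x * rexp (-(2 * (v : ℝ))⁻¹ * x ^ 2))) :=
    (integrable_mul_exp_neg_mul_sq hb).const_mul _
  have h2 : MeasureTheory.Integrable
      (fun x : ℝ => ((√(2 * π * v))⁻¹ * m) * rexp (-(2 * (v : ℝ))⁻¹ * x ^ 2)) :=
    (integrable_exp_neg_mul_sq hb).const_mul _
  calc ∫ x, gaussianPDFReal m v x * x
      = ∫ x, gaussianPDFReal m v (x + m) * (x + m) :=
        (MeasureTheory.integral_add_right_eq_self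
          (fun x => gaussianPDFReal m v x * x) m).symm
    _ = ∫ x, ((√(2 * π * v))⁻¹ * (x * rexp (-(2 * (v : ℝ))⁻¹ * x ^ 2))
          + ((√(2 * π * v))⁻¹ * m) * rexp (-(2 * (v : ℝ))⁻¹ * x ^ 2)) :=
        MeasureTheory.integral_congr_ae (Filter.Eventually.of_forall key)
    _ = (√(2 * π * v))⁻¹ * (∫ x : ℝ, x * rexp (-(2 * (v : ℝ))⁻¹ * x ^ 2))
          + ((√(2 * π * v))⁻¹ * m) * (∫ x : ℝ, rexp (-(2 * (v : ℝ))⁻¹ * x ^ 2)) := by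
        rw [MeasureTheory.integral_add h1 h2, MeasureTheory.integral_const_mul,
          MeasureTheory.integral_const_mul]
    _ = m := by
        rw [aux_integral_mul_exp]
        have h3 : ((√(2 * π * v))⁻¹ * m) * (∫ x : ℝ, rexp (-(2 * (v : ℝ))⁻¹ * x ^ 2))
            = m * ((√(2 * π * v))⁻¹ * ∫ x : ℝ, rexp (-(2 * (v : ℝ))⁻¹ * x ^ 2)) := by ring
        rw [mul_zero, zero_add, h3, hexp, mul_one]

lemma aux_integrable_id_gaussian (m : ℝ) (v : ℝ≥0) :
    MeasureTheory.Integrable id (gaussianReal m v) := by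
  by_cases hv : v = 0
  · subst hv
    simp only [gaussianReal_zero_var]
    exact (MeasureTheory.integrable_const m).congr (MeasureTheory.ae_eq_dirac id).symm
  · rw [gaussianReal_of_var_ne_zero m hv]
    have hmeas : AEMeasurable (fun x => (gaussianPDFReal m v x).toNNReal)
        (MeasureTheory.volume : MeasureTheory.Measure ℝ) :=
      ((measurable_gaussianPDFReal m v).real_toNNReal).aemeasurable
    have : MeasureTheory.volume.withDensity (gaussianPDF m v)
        = MeasureTheory.volume.withDensity
            (fun x => ((gaussianPDFReal m v x).toNNReal : ℝ≥0∞)) := rfl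
    rw [this, MeasureTheory.integrable_withDensity_iff_integrable_coe_smul₀ hmeas]
    refine (aux_integrable_mul_pdf m hv).congr (Filter.Eventually.of_forall fun x => ?_)
    simp only [NNReal.smul_def, smul_eq_mul, Real.coe_toNNReal',
      max_eq_left (gaussianPDFReal_nonneg m v x), id]

lemma aux_integral_id_gaussian (m : ℝ) (v : ℝ≥0) :
    ∫ x, x ∂(gaussianReal m v) = m := by
  by_cases hv : v = 0
  · subst hv; simp
  · rw [gaussianReal_of_var_ne_zero m hv]
    have hmeas : Measurable (fun x => (gaussianPDFReal m v x).toNNReal) :=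
      (measurable_gaussianPDFReal m v).real_toNNReal
    have h : MeasureTheory.volume.withDensity (gaussianPDF m v)
        = MeasureTheory.volume.withDensity
            (fun x => ((gaussianPDFReal m v x).toNNReal : ℝ≥0∞)) := rfl
    rw [h, integral_withDensity_eq_integral_smul hmeas]
    calc ∫ x, (gaussianPDFReal m v x).toNNReal • x
        = ∫ x, gaussianPDFReal m v x * x := by
          refine MeasureTheory.integral_congr_ae (Filter.Eventually.of_forall fun x => ?_)
          simp only [NNReal.smul_def, smul_eq_mul, Real.coe_toNNReal',
            max_eq_left (gaussianPDFReal_nonneg m v x)]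
      _ = m := aux_integral_mul_pdf m hv

lemma aux_map_eval_pi {ι : Type*} [Fintype ι] [DecidableEq ι] (ν : ι → MeasureTheory.Measure ℝ)
    [∀ i, MeasureTheory.IsProbabilityMeasure (ν i)] (i : ι) :
    (MeasureTheory.Measure.pi ν).map (fun y => y i) = ν i := by
  ext s hs
  rw [MeasureTheory.Measure.map_apply (measurable_pi_apply i) hs]
  have hpre : (fun y : ι → ℝ => y i) ⁻¹' s
      = Set.pi Set.univ (Function.update (fun _ => Set.univ) i s) :=
    Set.eval_preimage
  rw [hpre, MeasureTheory.Measure.pi_pi]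
  rw [Finset.prod_eq_single i]
  · simp
  · intro b _ hb; simp [Function.update_of_ne hb]
  · simp

lemma aux_integrable_eval {n : ℕ} (m : Fin n → ℝ) (v : ℝ≥0) (i : Fin n) :
    MeasureTheory.Integrable (fun y : Fin n → ℝ => y i)
      (MeasureTheory.Measure.pi fun k => gaussianReal (m k) v) := by
  have h := aux_integrable_id_gaussian (m i) v
  rw [← aux_map_eval_pi (fun k => gaussianReal (m k) v) i] at h
  exact (MeasureTheory.integrable_map_measure
    h.aestronglyMeasurable (measurable_pi_apply i).aemeasurable).1 h

lemma aux_integral_eval {n : ℕ} (m : Fin n → ℝ) (v : ℝ≥0) (i : Fin n) :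
    ∫ y, y i ∂(MeasureTheory.Measure.pi fun k => gaussianReal (m k) v) = m i := by
  have h2 := MeasureTheory.integral_map
      (μ := MeasureTheory.Measure.pi fun k => gaussianReal (m k) v)
      (φ := fun y => y i) (measurable_pi_apply i).aemeasurable
      (f := fun x : ℝ => x) measurable_id.aestronglyMeasurable
  rw [aux_map_eval_pi (fun k => gaussianReal (m k) v) i] at h2
  exact h2.symm.trans (aux_integral_id_gaussian (m i) v)

lemma aux_integrable_mulVec {n q : ℕ} (C : Matrix (Fin q) (Fin n) ℝ)
    (m : Fin n → ℝ) (v : ℝ≥0) (j : Fin q) :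
    MeasureTheory.Integrable (fun y : Fin n → ℝ => C.mulVec y j)
      (MeasureTheory.Measure.pi fun k => gaussianReal (m k) v) := by
  simp only [mulVec, dotProduct]
  exact MeasureTheory.integrable_finset_sum _
    (fun i _ => (aux_integrable_eval m v i).const_mul (C j i))

lemma aux_integral_mulVec {n q : ℕ} (C : Matrix (Fin q) (Fin n) ℝ)
    (m : Fin n → ℝ) (v : ℝ≥0) (j : Fin q) :
    ∫ y, C.mulVec y j ∂(MeasureTheory.Measure.pi fun k => gaussianReal (m k) v)
      = C.mulVec m j := by
  simp only [mulVec, dotProduct]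
  rw [MeasureTheory.integral_finset_sum _
    (fun i _ => (aux_integrable_eval m v i).const_mul (C j i))]
  congr 1
  ext i
  rw [MeasureTheory.integral_const_mul, aux_integral_eval]

lemma aux_integrable_fst {α β : Type*} [MeasurableSpace α] [MeasurableSpace β]
    (P : MeasureTheory.Measure α) (Q : MeasureTheory.Measure β)
    [MeasureTheory.IsProbabilityMeasure P] [MeasureTheory.IsProbabilityMeasure Q]
    {f : α → ℝ} (hf : MeasureTheory.Integrable f P) :
    MeasureTheory.Integrable (fun y : α × β => f y.1) (P.prod Q) := by
  have hmap : (P.prod Q).map Prod.fst = P := by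
    rw [MeasureTheory.Measure.map_fst_prod]; simp
  have h1 : MeasureTheory.Integrable f ((P.prod Q).map Prod.fst) := hmap.symm ▸ hf
  exact (MeasureTheory.integrable_map_measure h1.aestronglyMeasurable
    measurable_fst.aemeasurable).1 h1

lemma aux_integrable_snd {α β : Type*} [MeasurableSpace α] [MeasurableSpace β]
    (P : MeasureTheory.Measure α) (Q : MeasureTheory.Measure β)
    [MeasureTheory.IsProbabilityMeasure P] [MeasureTheory.IsProbabilityMeasure Q]
    {f : β → ℝ} (hf : MeasureTheory.Integrable f Q) :
    MeasureTheory.Integrable (fun y : α × β => f y.2) (P.prod Q) := by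
  have hmap : (P.prod Q).map Prod.snd = Q := by
    rw [MeasureTheory.Measure.map_snd_prod]; simp
  have h1 : MeasureTheory.Integrable f ((P.prod Q).map Prod.snd) := hmap.symm ▸ hf
  exact (MeasureTheory.integrable_map_measure h1.aestronglyMeasurable
    measurable_snd.aemeasurable).1 h1

lemma aux_integral_fst {α β : Type*} [MeasurableSpace α] [MeasurableSpace β]
    (P : MeasureTheory.Measure α) (Q : MeasureTheory.Measure β)
    [MeasureTheory.IsProbabilityMeasure P] [MeasureTheory.IsProbabilityMeasure Q]
    {f : α → ℝ} (hf : MeasureTheory.AEStronglyMeasurable f P) :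
    ∫ y : α × β, f y.1 ∂(P.prod Q) = ∫ x, f x ∂P := by
  have hmap : (P.prod Q).map Prod.fst = P := by
    rw [MeasureTheory.Measure.map_fst_prod]; simp
  conv_rhs => rw [← hmap]
  exact (MeasureTheory.integral_map measurable_fst.aemeasurable
    (by rwa [hmap])).symm

lemma aux_integral_snd {α β : Type*} [MeasurableSpace α] [MeasurableSpace β]
    (P : MeasureTheory.Measure α) (Q : MeasureTheory.Measure β)
    [MeasureTheory.IsProbabilityMeasure P] [MeasureTheory.IsProbabilityMeasure Q]
    {f : β → ℝ} (hf : MeasureTheory.AEStronglyMeasurable f Q) :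
    ∫ y : α × β, f y.2 ∂(P.prod Q) = ∫ x, f x ∂Q := by
  have hmap : (P.prod Q).map Prod.snd = Q := by
    rw [MeasureTheory.Measure.map_snd_prod]; simp
  conv_rhs => rw [← hmap]
  exact (MeasureTheory.integral_map measurable_snd.aemeasurable
    (by rwa [hmap])).symm

end Aux

/-- Under the normal–normal data-generating distribution with the straPP transformation
assumption `β₀ = (σ₀/σ₁)β₁`, the straPP posterior-mean estimator is unbiased:
`E[β̂_s] = β₁`, i.e. `Bias(β̂_s) = E[β̂_s] − β₁ = 0`. -/
theorem strapp_estimator_unbiased {n₀ n₁ p : ℕ}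
    (X₀ : Matrix (Fin n₀) (Fin p) ℝ) (X₁ : Matrix (Fin n₁) (Fin p) ℝ)
    (σ₀ σ₁ a₀ : ℝ) (hσ₀ : 0 < σ₀) (hσ₁ : 0 < σ₁) (ha₀ : 0 < a₀) (ha₀' : a₀ ≤ 1)
    (hs : IsUnit (X₁ᵀ * X₁ + a₀ • (X₀ᵀ * X₀)).det)
    (β₁ : Fin p → ℝ)
    (μ : Measure ((Fin n₀ → ℝ) × (Fin n₁ → ℝ)))
    (hμ : μ = dataMeasure X₀ X₁ σ₀ σ₁ ((σ₀ / σ₁) • β₁) β₁) :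
    ∀ j : Fin p, ∫ y, strapEst X₀ X₁ σ₀ σ₁ a₀ y j ∂μ - β₁ j = 0 := by
  subst hμ
  intro j
  have hσ₀' : σ₀ ≠ 0 := ne_of_gt hσ₀
  have hσ₁' : σ₁ ≠ 0 := ne_of_gt hσ₁
  set A : Matrix (Fin p) (Fin p) ℝ := X₁ᵀ * X₁ + a₀ • (X₀ᵀ * X₀) with hA
  set M : Matrix (Fin p) (Fin p) ℝ := σ₁ ^ 2 • A⁻¹ with hM
  set C₀ : Matrix (Fin p) (Fin n₀) ℝ := (a₀ / (σ₀ * σ₁)) • (M * X₀ᵀ) with hC₀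
  set C₁ : Matrix (Fin p) (Fin n₁) ℝ := (1 / σ₁ ^ 2) • (M * X₁ᵀ) with hC₁
  set mean₀ : Fin n₀ → ℝ := X₀.mulVec ((σ₀ / σ₁) • β₁) with hmean₀
  set mean₁ : Fin n₁ → ℝ := X₁.mulVec β₁ with hmean₁
  set P := MeasureTheory.Measure.pi fun i => gaussianReal (mean₀ i) ((σ₀ ^ 2).toNNReal) with hP
  set Q := MeasureTheory.Measure.pi fun i => gaussianReal (mean₁ i) ((σ₁ ^ 2).toNNReal) with hQ
  have hdata : dataMeasure X₀ X₁ σ₀ σ₁ ((σ₀ / σ₁) • β₁) β₁ = P.prod Q := rfl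
  have hrep : ∀ y : (Fin n₀ → ℝ) × (Fin n₁ → ℝ),
      strapEst X₀ X₁ σ₀ σ₁ a₀ y j = C₀.mulVec y.1 j + C₁.mulVec y.2 j := by
    intro y
    simp only [strapEst, hC₀, hC₁, hM, hA, mulVec_add, mulVec_smul, smul_mulVec,
      mulVec_mulVec, Pi.add_apply, Pi.smul_apply, smul_eq_mul]
    ring
  have hint0 : MeasureTheory.Integrable (fun y : (Fin n₀ → ℝ) × (Fin n₁ → ℝ) =>
      C₀.mulVec y.1 j) (P.prod Q) :=
    aux_integrable_fst P Q (aux_integrable_mulVec C₀ mean₀ _ j)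
  have hint1 : MeasureTheory.Integrable (fun y : (Fin n₀ → ℝ) × (Fin n₁ → ℝ) =>
      C₁.mulVec y.2 j) (P.prod Q) :=
    aux_integrable_snd P Q (aux_integrable_mulVec C₁ mean₁ _ j)
  have hI : ∫ y, strapEst X₀ X₁ σ₀ σ₁ a₀ y j ∂(dataMeasure X₀ X₁ σ₀ σ₁ ((σ₀ / σ₁) • β₁) β₁)
      = C₀.mulVec mean₀ j + C₁.mulVec mean₁ j := by
    rw [hdata]
    rw [MeasureTheory.integral_congr_ae (Filter.Eventually.of_forall hrep)]
    rw [MeasureTheory.integral_add hint0 hint1]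
    have e0 : ∫ y : (Fin n₀ → ℝ) × (Fin n₁ → ℝ), C₀.mulVec y.1 j ∂(P.prod Q)
        = C₀.mulVec mean₀ j := by
      rw [aux_integral_fst P Q (f := fun w => C₀.mulVec w j)
        (aux_integrable_mulVec C₀ mean₀ _ j).aestronglyMeasurable]
      exact aux_integral_mulVec C₀ mean₀ _ j
    have e1 : ∫ y : (Fin n₀ → ℝ) × (Fin n₁ → ℝ), C₁.mulVec y.2 j ∂(P.prod Q)
        = C₁.mulVec mean₁ j := by
      rw [aux_integral_snd P Q (f := fun w => C₁.mulVec w j)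
        (aux_integrable_mulVec C₁ mean₁ _ j).aestronglyMeasurable]
      exact aux_integral_mulVec C₁ mean₁ _ j
    rw [e0, e1]
  rw [hI]
  have hA' : A⁻¹ * A = 1 := Matrix.nonsing_inv_mul A hs
  have h0 : C₀.mulVec mean₀ = (A⁻¹ * (a₀ • (X₀ᵀ * X₀))).mulVec β₁ := by
    simp only [hmean₀, hC₀, hM, Matrix.mulVec_mulVec, Matrix.smul_mul, Matrix.mul_smul,
      Matrix.mul_assoc, Matrix.smul_mulVec, Matrix.mulVec_smul, smul_smul]
    congr 1
    field_simp
  have h1 : C₁.mulVec mean₁ = (A⁻¹ * (X₁ᵀ * X₁)).mulVec β₁ := by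
    simp only [hmean₁, hC₁, hM, Matrix.mulVec_mulVec, Matrix.smul_mul, Matrix.mul_smul,
      Matrix.mul_assoc, Matrix.smul_mulVec, Matrix.mulVec_smul, smul_smul]
    rw [show 1 / σ₁ ^ 2 * σ₁ ^ 2 = 1 by field_simp]
    rw [one_smul]
  have key : C₀.mulVec mean₀ j + C₁.mulVec mean₁ j = β₁ j := by
    have : C₀.mulVec mean₀ + C₁.mulVec mean₁ = β₁ := by
      rw [h0, h1, ← Matrix.add_mulVec, ← Matrix.mul_add, add_comm (a₀ • (X₀ᵀ * X₀)) (X₁ᵀ * X₁),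
        ← hA, hA', Matrix.one_mulVec]
    exact congrFun this j
  rw [key]
  ring
end
end

section
/- Under the balanced two-arm design, the bias matrix of the power-prior estimator is a scalar multiple of the identity: Σ_p · ((1/σ₁²)X₁ᵀX₁ + (a₀/(σ₀σ₁))X₀ᵀX₀) = κ·I₂ with κ = (n₁σ₀² + a₀n₀σ₀σ₁)/(n₁σ₀² + a₀n₀σ₁²), so that under the straPP transformation assumption the bias of each component of the power-prior estimator equals (κ − 1)·β₁ⱼ and the percent bias (κ − 1) = a₀n₀σ₁(σ₀ − σ₁)/(n₁σ₀² + a₀n₀σ₁²) does not depend on β₁. -/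
open Matrix

noncomputable section

/-- The design cross-product shape for the balanced two-arm design (intercept plus treatment
indicator, half the subjects treated): `X₀ᵀX₀ = (n₀/2)·M` and `X₁ᵀX₁ = (n₁/2)·M` with `M` the
matrix with rows `(2,1)` and `(1,1)`. -/
def balM : Matrix (Fin 2) (Fin 2) ℝ := !![2, 1; 1, 1]

/-!
Both weighted cross-product matrices are scalar multiples of the same invertible matrix `M`,
so `Σ_p` times the second one collapses to the ratio of the two scalars times the identity;
clearing the common factor `1 / (2 σ₀² σ₁²)` from that ratio gives `κ`.
-/

/- The identity also holds for `c = 0`, where both sides are `0` by the junk value `0⁻¹ = 0`. -/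
theorem Matrix.inv_smul_mul_smul {n K : Type*} [Fintype n] [DecidableEq n] [Field K]
    {M : Matrix n n K} (hM : IsUnit M.det) (c d : K) :
    (c • M)⁻¹ * (d • M) = (d / c) • (1 : Matrix n n K) := by
  rcases eq_or_ne c 0 with rfl | hc
  · simp
  · have : Invertible c := invertibleOfNonzero hc
    rw [inv_smul M c hM, invOf_eq_inv, smul_mul_smul_comm, nonsing_inv_mul M hM, div_eq_inv_mul]

theorem isUnit_det_balM : IsUnit balM.det := by
  norm_num [balM, det_fin_two_of]

theorem balanced_weight_ratio {n₀ n₁ σ₀ σ₁ a₀ : ℝ} (hσ₀ : σ₀ ≠ 0) (hσ₁ : σ₁ ≠ 0) :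
    (1 / σ₁ ^ 2 * (n₁ / 2) + a₀ / (σ₀ * σ₁) * (n₀ / 2))
        / (1 / σ₁ ^ 2 * (n₁ / 2) + a₀ / σ₀ ^ 2 * (n₀ / 2))
      = (n₁ * σ₀ ^ 2 + a₀ * n₀ * σ₀ * σ₁) / (n₁ * σ₀ ^ 2 + a₀ * n₀ * σ₁ ^ 2) := by
  have hk : (2 * σ₀ ^ 2 * σ₁ ^ 2 : ℝ) ≠ 0 := by positivity
  rw [← mul_div_mul_left _ _ hk]
  congr 1 <;> field_simp

theorem pp_bias_matrix_balanced_design_general (n₀ n₁ σ₀ σ₁ a₀ : ℝ)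
    (hn₀ : 0 < n₀) (hn₁ : 0 < n₁) (hσ₀ : 0 < σ₀) (hσ₁ : 0 < σ₁)
    (ha₀ : 0 < a₀) :
    ((1 / σ₁ ^ 2) • ((n₁ / 2) • balM) + (a₀ / σ₀ ^ 2) • ((n₀ / 2) • balM))⁻¹
        * ((1 / σ₁ ^ 2) • ((n₁ / 2) • balM) + (a₀ / (σ₀ * σ₁)) • ((n₀ / 2) • balM))
      = ((n₁ * σ₀ ^ 2 + a₀ * n₀ * σ₀ * σ₁) / (n₁ * σ₀ ^ 2 + a₀ * n₀ * σ₁ ^ 2))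
          • (1 : Matrix (Fin 2) (Fin 2) ℝ) ∧
    (n₁ * σ₀ ^ 2 + a₀ * n₀ * σ₀ * σ₁) / (n₁ * σ₀ ^ 2 + a₀ * n₀ * σ₁ ^ 2) - 1
      = a₀ * n₀ * σ₁ * (σ₀ - σ₁) / (n₁ * σ₀ ^ 2 + a₀ * n₀ * σ₁ ^ 2) ∧
    ∀ (β₁ : Fin 2 → ℝ) (j : Fin 2),
      ((((1 / σ₁ ^ 2) • ((n₁ / 2) • balM) + (a₀ / σ₀ ^ 2) • ((n₀ / 2) • balM))⁻¹
          * ((1 / σ₁ ^ 2) • ((n₁ / 2) • balM)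
              + (a₀ / (σ₀ * σ₁)) • ((n₀ / 2) • balM))).mulVec β₁) j - β₁ j
        = ((n₁ * σ₀ ^ 2 + a₀ * n₀ * σ₀ * σ₁) / (n₁ * σ₀ ^ 2 + a₀ * n₀ * σ₁ ^ 2) - 1)
            * β₁ j := by
  have hbias :
      ((1 / σ₁ ^ 2) • ((n₁ / 2) • balM) + (a₀ / σ₀ ^ 2) • ((n₀ / 2) • balM))⁻¹
          * ((1 / σ₁ ^ 2) • ((n₁ / 2) • balM) + (a₀ / (σ₀ * σ₁)) • ((n₀ / 2) • balM))
        = ((n₁ * σ₀ ^ 2 + a₀ * n₀ * σ₀ * σ₁) / (n₁ * σ₀ ^ 2 + a₀ * n₀ * σ₁ ^ 2))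
            • (1 : Matrix (Fin 2) (Fin 2) ℝ) := by
    simp only [smul_smul, ← add_smul]
    rw [inv_smul_mul_smul isUnit_det_balM, balanced_weight_ratio hσ₀.ne' hσ₁.ne']
  have hden : n₁ * σ₀ ^ 2 + a₀ * n₀ * σ₁ ^ 2 ≠ 0 := by positivity
  refine ⟨hbias, by rw [div_sub_one hden]; ring, fun β₁ j => ?_⟩
  rw [hbias, smul_mulVec, one_mulVec, Pi.smul_apply, smul_eq_mul]
  ring

/-- Under the balanced two-arm design, the bias matrix of the power-prior estimator is a scalar
multiple of the identity: `Σ_p · ((1/σ₁²)X₁ᵀX₁ + (a₀/(σ₀σ₁))X₀ᵀX₀) = κ·I₂` with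
`κ = (n₁σ₀² + a₀n₀σ₀σ₁)/(n₁σ₀² + a₀n₀σ₁²)`; hence under the straPP transformation assumption
the bias of each component of the power-prior estimator is `(κ − 1)·β₁ⱼ`, and the percent bias
`κ − 1 = a₀n₀σ₁(σ₀ − σ₁)/(n₁σ₀² + a₀n₀σ₁²)` does not depend on `β₁`. -/
theorem pp_bias_matrix_balanced_design (n₀ n₁ σ₀ σ₁ a₀ : ℝ)
    (hn₀ : 0 < n₀) (hn₁ : 0 < n₁) (hσ₀ : 0 < σ₀) (hσ₁ : 0 < σ₁)
    (ha₀ : 0 < a₀) (ha₀' : a₀ ≤ 1) :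
    ((1 / σ₁ ^ 2) • ((n₁ / 2) • balM) + (a₀ / σ₀ ^ 2) • ((n₀ / 2) • balM))⁻¹
        * ((1 / σ₁ ^ 2) • ((n₁ / 2) • balM) + (a₀ / (σ₀ * σ₁)) • ((n₀ / 2) • balM))
      = ((n₁ * σ₀ ^ 2 + a₀ * n₀ * σ₀ * σ₁) / (n₁ * σ₀ ^ 2 + a₀ * n₀ * σ₁ ^ 2))
          • (1 : Matrix (Fin 2) (Fin 2) ℝ) ∧
    (n₁ * σ₀ ^ 2 + a₀ * n₀ * σ₀ * σ₁) / (n₁ * σ₀ ^ 2 + a₀ * n₀ * σ₁ ^ 2) - 1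
      = a₀ * n₀ * σ₁ * (σ₀ - σ₁) / (n₁ * σ₀ ^ 2 + a₀ * n₀ * σ₁ ^ 2) ∧
    ∀ (β₁ : Fin 2 → ℝ) (j : Fin 2),
      ((((1 / σ₁ ^ 2) • ((n₁ / 2) • balM) + (a₀ / σ₀ ^ 2) • ((n₀ / 2) • balM))⁻¹
          * ((1 / σ₁ ^ 2) • ((n₁ / 2) • balM)
              + (a₀ / (σ₀ * σ₁)) • ((n₀ / 2) • balM))).mulVec β₁) j - β₁ j
        = ((n₁ * σ₀ ^ 2 + a₀ * n₀ * σ₀ * σ₁) / (n₁ * σ₀ ^ 2 + a₀ * n₀ * σ₁ ^ 2) - 1)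
            * β₁ j :=
  pp_bias_matrix_balanced_design_general n₀ n₁ σ₀ σ₁ a₀ hn₀ hn₁ hσ₀ hσ₁ ha₀
end
end

section
/- Under the balanced two-arm design, the treatment-effect variance of the straPP estimator has the closed form: the (1,1) diagonal entry (indexing the treatment coefficient) of σ₁²·Σ̃·(X₁ᵀX₁ + a₀²X₀ᵀX₀)·Σ̃, where Σ̃ = (X₁ᵀX₁ + a₀X₀ᵀX₀)⁻¹, equals 4σ₁²(n₁ + a₀²n₀)/(n₁ + a₀n₀)². -/
/-
When both arms share the design shape `M`, the precision `X₁ᵀX₁ + a₀X₀ᵀX₀` and the middle factor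
`X₁ᵀX₁ + a₀²X₀ᵀX₀` are scalar multiples `c • M` and `d • M`, so the sandwich collapses to
`(d / c²) • M⁻¹`; for `M = !![2, 1; 1, 1]` the treatment entry of `M⁻¹` is `2`.
-/

open Matrix

noncomputable section

theorem Matrix.inv_smul_mul_smul_mul_inv_smul {K n : Type*} [Field K] [Fintype n] [DecidableEq n]
    {A : Matrix n n K} (hA : IsUnit A.det) {c : K} (hc : c ≠ 0) (d : K) :
    (c • A)⁻¹ * (d • A) * (c • A)⁻¹ = (d / c ^ 2) • A⁻¹ := by
  have hinv : (c • A)⁻¹ = c⁻¹ • A⁻¹ := inv_eq_left_inv <| by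
    rw [smul_mul_smul, nonsing_inv_mul _ hA, inv_mul_cancel₀ hc, one_smul]
  rw [hinv, smul_mul_smul, smul_mul_smul, nonsing_inv_mul _ hA, one_mul]
  congr 1
  ring

theorem balM_mul_inv : balM * !![1, -1; -1, 2] = 1 := by
  rw [balM, mul_fin_two, one_fin_two]
  norm_num

theorem balM_inv : balM⁻¹ = !![1, -1; -1, 2] :=
  inv_eq_right_inv balM_mul_inv

theorem strapp_variance_balanced_design_general (n₀ n₁ σ₁ a₀ : ℝ)
    (hn₀ : 0 < n₀) (hn₁ : 0 < n₁)
    (ha₀ : 0 < a₀) :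
    (σ₁ ^ 2 • (((n₁ / 2) • balM + a₀ • ((n₀ / 2) • balM))⁻¹
        * ((n₁ / 2) • balM + a₀ ^ 2 • ((n₀ / 2) • balM))
        * ((n₁ / 2) • balM + a₀ • ((n₀ / 2) • balM))⁻¹)) 1 1
      = 4 * σ₁ ^ 2 * (n₁ + a₀ ^ 2 * n₀) / (n₁ + a₀ * n₀) ^ 2 := by
  have hprec : (n₁ / 2) • balM + a₀ • ((n₀ / 2) • balM) = ((n₁ + a₀ * n₀) / 2) • balM := by
    module
  have hmid : (n₁ / 2) • balM + a₀ ^ 2 • ((n₀ / 2) • balM) = ((n₁ + a₀ ^ 2 * n₀) / 2) • balM := by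
    module
  have hc : (n₁ + a₀ * n₀) / 2 ≠ 0 := by positivity
  rw [hprec, hmid, inv_smul_mul_smul_mul_inv_smul isUnit_det_balM hc, balM_inv]
  simp only [Matrix.smul_apply, smul_eq_mul, of_apply, cons_val_one, cons_val_fin_one]
  field_simp
  ring

/-- Under the balanced two-arm design, the treatment-effect variance of the straPP estimator
has the closed form: the `(1,1)` diagonal entry (indexing the treatment coefficient) of
`σ₁²·Σ̃·(X₁ᵀX₁ + a₀²X₀ᵀX₀)·Σ̃`, where `Σ̃ = (X₁ᵀX₁ + a₀X₀ᵀX₀)⁻¹`, equals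
`4σ₁²(n₁ + a₀²n₀)/(n₁ + a₀n₀)²`. -/
theorem strapp_variance_balanced_design (n₀ n₁ σ₀ σ₁ a₀ : ℝ)
    (hn₀ : 0 < n₀) (hn₁ : 0 < n₁) (hσ₀ : 0 < σ₀) (hσ₁ : 0 < σ₁)
    (ha₀ : 0 < a₀) (ha₀' : a₀ ≤ 1) :
    (σ₁ ^ 2 • (((n₁ / 2) • balM + a₀ • ((n₀ / 2) • balM))⁻¹
        * ((n₁ / 2) • balM + a₀ ^ 2 • ((n₀ / 2) • balM))
        * ((n₁ / 2) • balM + a₀ • ((n₀ / 2) • balM))⁻¹)) 1 1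
      = 4 * σ₁ ^ 2 * (n₁ + a₀ ^ 2 * n₀) / (n₁ + a₀ * n₀) ^ 2 :=
  strapp_variance_balanced_design_general n₀ n₁ σ₁ a₀ hn₀ hn₁ ha₀
end
end

section
/- Under the balanced two-arm design, the treatment-effect variance of the power-prior estimator has the closed form: the (1,1) diagonal entry (indexing the treatment coefficient) of Σ_p·((1/σ₁²)X₁ᵀX₁ + (a₀²/σ₀²)X₀ᵀX₀)·Σ_p equals 4σ₁²σ₀²(n₁σ₀² + a₀²n₀σ₁²)/(n₁σ₀² + a₀n₀σ₁²)². -/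
open Matrix

noncomputable section

/-- Under the balanced two-arm design, the treatment-effect variance of the power-prior
estimator has the closed form: the `(1,1)` diagonal entry (indexing the treatment coefficient)
of `Σ_p·((1/σ₁²)X₁ᵀX₁ + (a₀²/σ₀²)X₀ᵀX₀)·Σ_p`, where
`Σ_p = ((1/σ₁²)X₁ᵀX₁ + (a₀/σ₀²)X₀ᵀX₀)⁻¹`, equals
`4σ₁²σ₀²(n₁σ₀² + a₀²n₀σ₁²)/(n₁σ₀² + a₀n₀σ₁²)²`. -/
theorem pp_variance_balanced_design (n₀ n₁ σ₀ σ₁ a₀ : ℝ)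
    (hn₀ : 0 < n₀) (hn₁ : 0 < n₁) (hσ₀ : 0 < σ₀) (hσ₁ : 0 < σ₁)
    (ha₀ : 0 < a₀) (ha₀' : a₀ ≤ 1) :
    ((((1 / σ₁ ^ 2) • ((n₁ / 2) • balM) + (a₀ / σ₀ ^ 2) • ((n₀ / 2) • balM))⁻¹
        * ((1 / σ₁ ^ 2) • ((n₁ / 2) • balM) + (a₀ ^ 2 / σ₀ ^ 2) • ((n₀ / 2) • balM))
        * (((1 / σ₁ ^ 2) • ((n₁ / 2) • balM) + (a₀ / σ₀ ^ 2) • ((n₀ / 2) • balM))⁻¹) :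
        Matrix (Fin 2) (Fin 2) ℝ)) 1 1
      = 4 * σ₁ ^ 2 * σ₀ ^ 2 * (n₁ * σ₀ ^ 2 + a₀ ^ 2 * n₀ * σ₁ ^ 2)
          / (n₁ * σ₀ ^ 2 + a₀ * n₀ * σ₁ ^ 2) ^ 2 := by
  set c : ℝ := 1 / σ₁ ^ 2 * (n₁ / 2) + a₀ / σ₀ ^ 2 * (n₀ / 2) with hc
  set d : ℝ := 1 / σ₁ ^ 2 * (n₁ / 2) + a₀ ^ 2 / σ₀ ^ 2 * (n₀ / 2) with hd
  have hσ₀' : σ₀ ^ 2 ≠ 0 := by positivity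
  have hσ₁' : σ₁ ^ 2 ≠ 0 := by positivity
  have hcpos : 0 < c := by
    rw [hc]; positivity
  have hcne : c ≠ 0 := ne_of_gt hcpos
  have hA : (1 / σ₁ ^ 2) • ((n₁ / 2) • balM) + (a₀ / σ₀ ^ 2) • ((n₀ / 2) • balM)
      = !![2 * c, c; c, c] := by
    rw [balM]
    ext i j
    fin_cases i <;> fin_cases j <;>
      simp [hc, Matrix.smul_apply] <;> ring
  have hB : (1 / σ₁ ^ 2) • ((n₁ / 2) • balM) + (a₀ ^ 2 / σ₀ ^ 2) • ((n₀ / 2) • balM)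
      = !![2 * d, d; d, d] := by
    rw [balM]
    ext i j
    fin_cases i <;> fin_cases j <;>
      simp [hd, Matrix.smul_apply] <;> ring
  have hAinv : (!![2 * c, c; c, c] : Matrix (Fin 2) (Fin 2) ℝ)⁻¹
      = !![c⁻¹, -c⁻¹; -c⁻¹, 2 * c⁻¹] := by
    apply Matrix.inv_eq_right_inv
    ext i j
    fin_cases i <;> fin_cases j <;>
      simp [Matrix.mul_apply, Fin.sum_univ_two, Matrix.one_apply] <;>
      field_simp <;> ring
  rw [hA, hB, hAinv]
  have h11 : (!![c⁻¹, -c⁻¹; -c⁻¹, 2 * c⁻¹] * !![2 * d, d; d, d] *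
      !![c⁻¹, -c⁻¹; -c⁻¹, 2 * c⁻¹]) 1 1 = 2 * d * c⁻¹ * c⁻¹ := by
    simp [Matrix.mul_apply, Fin.sum_univ_two]
    field_simp
    ring
  rw [h11, hc, hd]
  have hden : n₁ * σ₀ ^ 2 + a₀ * n₀ * σ₁ ^ 2 ≠ 0 := by positivity
  field_simp
  ring
end
end

section
/- The MSE-equivalence threshold formula: if σ₀ ≠ σ₁, then with V_s = 4σ₁²(n₁ + a₀²n₀)/(n₁ + a₀n₀)², V_p = 4σ₁²σ₀²(n₁σ₀² + a₀²n₀σ₁²)/(n₁σ₀² + a₀n₀σ₁²)², and percent bias pb = a₀n₀σ₁(σ₀ − σ₁)/(n₁σ₀² + a₀n₀σ₁²), one has (V_s − V_p)/pb² = (2(n₁σ₀² + a₀n₀σ₁²)/(a₀n₀(σ₀ − σ₁)))² · ((n₁ + a₀²n₀)/(n₁ + a₀n₀)² − σ₀²(n₁σ₀² + a₀²n₀σ₁²)/(n₁σ₀² + a₀n₀σ₁²)²). In particular the threshold value β₁₁* at which the straPP and power-prior estimators of the treatment effect have equal MSE satisfies (β₁₁*)² equal to the right-hand side. -/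
/-- The MSE-equivalence threshold formula in the balanced two-arm normal–normal design:
if `σ₀ ≠ σ₁`, then with the straPP treatment-effect variance
`V_s = 4σ₁²(n₁ + a₀²n₀)/(n₁ + a₀n₀)²`, the power-prior treatment-effect variance
`V_p = 4σ₁²σ₀²(n₁σ₀² + a₀²n₀σ₁²)/(n₁σ₀² + a₀n₀σ₁²)²` and the percent bias
`pb = a₀n₀σ₁(σ₀ − σ₁)/(n₁σ₀² + a₀n₀σ₁²)`, one has
`(V_s − V_p)/pb² = (2(n₁σ₀² + a₀n₀σ₁²)/(a₀n₀(σ₀ − σ₁)))² ·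
  ((n₁ + a₀²n₀)/(n₁ + a₀n₀)² − σ₀²(n₁σ₀² + a₀²n₀σ₁²)/(n₁σ₀² + a₀n₀σ₁²)²)`,
and in particular any threshold value `b = β₁₁*` at which the two estimators have equal MSE
(`V_s = V_p + (pb·b)²`) satisfies `b²` equal to that right-hand side. -/
theorem mse_equivalence_threshold (n₀ n₁ σ₀ σ₁ a₀ : ℝ)
    (hn₀ : 0 < n₀) (hn₁ : 0 < n₁) (hσ₀ : 0 < σ₀) (hσ₁ : 0 < σ₁)
    (ha₀ : 0 < a₀) (ha₀' : a₀ ≤ 1) (hσ : σ₀ ≠ σ₁) :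
    (4 * σ₁ ^ 2 * (n₁ + a₀ ^ 2 * n₀) / (n₁ + a₀ * n₀) ^ 2
        - 4 * σ₁ ^ 2 * σ₀ ^ 2 * (n₁ * σ₀ ^ 2 + a₀ ^ 2 * n₀ * σ₁ ^ 2)
            / (n₁ * σ₀ ^ 2 + a₀ * n₀ * σ₁ ^ 2) ^ 2)
      / (a₀ * n₀ * σ₁ * (σ₀ - σ₁) / (n₁ * σ₀ ^ 2 + a₀ * n₀ * σ₁ ^ 2)) ^ 2
      = (2 * (n₁ * σ₀ ^ 2 + a₀ * n₀ * σ₁ ^ 2) / (a₀ * n₀ * (σ₀ - σ₁))) ^ 2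
          * ((n₁ + a₀ ^ 2 * n₀) / (n₁ + a₀ * n₀) ^ 2
              - σ₀ ^ 2 * (n₁ * σ₀ ^ 2 + a₀ ^ 2 * n₀ * σ₁ ^ 2)
                  / (n₁ * σ₀ ^ 2 + a₀ * n₀ * σ₁ ^ 2) ^ 2) ∧
    ∀ b : ℝ,
      4 * σ₁ ^ 2 * (n₁ + a₀ ^ 2 * n₀) / (n₁ + a₀ * n₀) ^ 2
          = 4 * σ₁ ^ 2 * σ₀ ^ 2 * (n₁ * σ₀ ^ 2 + a₀ ^ 2 * n₀ * σ₁ ^ 2)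
              / (n₁ * σ₀ ^ 2 + a₀ * n₀ * σ₁ ^ 2) ^ 2
            + (a₀ * n₀ * σ₁ * (σ₀ - σ₁) / (n₁ * σ₀ ^ 2 + a₀ * n₀ * σ₁ ^ 2) * b) ^ 2 →
        b ^ 2
          = (2 * (n₁ * σ₀ ^ 2 + a₀ * n₀ * σ₁ ^ 2) / (a₀ * n₀ * (σ₀ - σ₁))) ^ 2
              * ((n₁ + a₀ ^ 2 * n₀) / (n₁ + a₀ * n₀) ^ 2
                  - σ₀ ^ 2 * (n₁ * σ₀ ^ 2 + a₀ ^ 2 * n₀ * σ₁ ^ 2)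
                      / (n₁ * σ₀ ^ 2 + a₀ * n₀ * σ₁ ^ 2) ^ 2) := by

  have hD : n₁ * σ₀ ^ 2 + a₀ * n₀ * σ₁ ^ 2 ≠ 0 := by positivity
  have hN : n₁ + a₀ * n₀ ≠ 0 := by positivity
  have hd : σ₀ - σ₁ ≠ 0 := sub_ne_zero.mpr hσ
  have ha : a₀ ≠ 0 := ne_of_gt ha₀
  have hn : n₀ ≠ 0 := ne_of_gt hn₀
  have hs1 : σ₁ ≠ 0 := ne_of_gt hσ₁
  have hpb : a₀ * n₀ * σ₁ * (σ₀ - σ₁) / (n₁ * σ₀ ^ 2 + a₀ * n₀ * σ₁ ^ 2) ≠ 0 := by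
    apply div_ne_zero _ hD
    exact mul_ne_zero (mul_ne_zero (mul_ne_zero ha hn) hs1) hd
  have key : (4 * σ₁ ^ 2 * (n₁ + a₀ ^ 2 * n₀) / (n₁ + a₀ * n₀) ^ 2
        - 4 * σ₁ ^ 2 * σ₀ ^ 2 * (n₁ * σ₀ ^ 2 + a₀ ^ 2 * n₀ * σ₁ ^ 2)
            / (n₁ * σ₀ ^ 2 + a₀ * n₀ * σ₁ ^ 2) ^ 2)
      / (a₀ * n₀ * σ₁ * (σ₀ - σ₁) / (n₁ * σ₀ ^ 2 + a₀ * n₀ * σ₁ ^ 2)) ^ 2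
      = (2 * (n₁ * σ₀ ^ 2 + a₀ * n₀ * σ₁ ^ 2) / (a₀ * n₀ * (σ₀ - σ₁))) ^ 2
          * ((n₁ + a₀ ^ 2 * n₀) / (n₁ + a₀ * n₀) ^ 2
              - σ₀ ^ 2 * (n₁ * σ₀ ^ 2 + a₀ ^ 2 * n₀ * σ₁ ^ 2)
                  / (n₁ * σ₀ ^ 2 + a₀ * n₀ * σ₁ ^ 2) ^ 2) := by
    field_simp
    ring
  refine ⟨key, fun b hb => ?_⟩
  have hb2 : (a₀ * n₀ * σ₁ * (σ₀ - σ₁) / (n₁ * σ₀ ^ 2 + a₀ * n₀ * σ₁ ^ 2)) ^ 2 * b ^ 2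
      = 4 * σ₁ ^ 2 * (n₁ + a₀ ^ 2 * n₀) / (n₁ + a₀ * n₀) ^ 2
        - 4 * σ₁ ^ 2 * σ₀ ^ 2 * (n₁ * σ₀ ^ 2 + a₀ ^ 2 * n₀ * σ₁ ^ 2)
            / (n₁ * σ₀ ^ 2 + a₀ * n₀ * σ₁ ^ 2) ^ 2 := by
    rw [hb]; ring
  have : b ^ 2 = (4 * σ₁ ^ 2 * (n₁ + a₀ ^ 2 * n₀) / (n₁ + a₀ * n₀) ^ 2
        - 4 * σ₁ ^ 2 * σ₀ ^ 2 * (n₁ * σ₀ ^ 2 + a₀ ^ 2 * n₀ * σ₁ ^ 2)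
            / (n₁ * σ₀ ^ 2 + a₀ * n₀ * σ₁ ^ 2) ^ 2)
      / (a₀ * n₀ * σ₁ * (σ₀ - σ₁) / (n₁ * σ₀ ^ 2 + a₀ * n₀ * σ₁ ^ 2)) ^ 2 := by
    rw [eq_div_iff (pow_ne_zero 2 hpb)]
    linarith [hb2]
  rw [this, key]
end

section
/- If 0 < a₀ ≤ 1 and 0 < σ₁ ≤ σ₀, then in the balanced two-arm normal–normal design the straPP treatment-effect variance never exceeds that of the power prior: 4σ₁²(n₁ + a₀²n₀)/(n₁ + a₀n₀)² ≤ 4σ₁²σ₀²(n₁σ₀² + a₀²n₀σ₁²)/(n₁σ₀² + a₀n₀σ₁²)². Consequently the MSE of the straPP treatment-effect estimator is at most that of the power-prior estimator for every true value of the treatment effect (the MSE-equivalence threshold is never crossed). -/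
/-- If `0 < a₀ ≤ 1` and `0 < σ₁ ≤ σ₀`, then in the balanced two-arm normal–normal design the
straPP treatment-effect variance never exceeds that of the power prior:
`4σ₁²(n₁ + a₀²n₀)/(n₁ + a₀n₀)² ≤ 4σ₁²σ₀²(n₁σ₀² + a₀²n₀σ₁²)/(n₁σ₀² + a₀n₀σ₁²)²`.
Consequently (since the straPP estimator is unbiased while the power-prior estimator has
percent bias `pb = a₀n₀σ₁(σ₀ − σ₁)/(n₁σ₀² + a₀n₀σ₁²)`), the MSE of the straPP
treatment-effect estimator is at most that of the power-prior estimator for every true value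
`b` of the treatment effect: the MSE-equivalence threshold is never crossed. -/
theorem strapp_mse_never_exceeds_pp (n₀ n₁ σ₀ σ₁ a₀ : ℝ)
    (hn₀ : 0 < n₀) (hn₁ : 0 < n₁) (hσ₁ : 0 < σ₁) (hσ : σ₁ ≤ σ₀)
    (ha₀ : 0 < a₀) (ha₀' : a₀ ≤ 1) :
    4 * σ₁ ^ 2 * (n₁ + a₀ ^ 2 * n₀) / (n₁ + a₀ * n₀) ^ 2
      ≤ 4 * σ₁ ^ 2 * σ₀ ^ 2 * (n₁ * σ₀ ^ 2 + a₀ ^ 2 * n₀ * σ₁ ^ 2)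
          / (n₁ * σ₀ ^ 2 + a₀ * n₀ * σ₁ ^ 2) ^ 2 ∧
    ∀ b : ℝ,
      4 * σ₁ ^ 2 * (n₁ + a₀ ^ 2 * n₀) / (n₁ + a₀ * n₀) ^ 2
        ≤ 4 * σ₁ ^ 2 * σ₀ ^ 2 * (n₁ * σ₀ ^ 2 + a₀ ^ 2 * n₀ * σ₁ ^ 2)
              / (n₁ * σ₀ ^ 2 + a₀ * n₀ * σ₁ ^ 2) ^ 2
            + (a₀ * n₀ * σ₁ * (σ₀ - σ₁) / (n₁ * σ₀ ^ 2 + a₀ * n₀ * σ₁ ^ 2) * b) ^ 2 := by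
  have hσ₀ : 0 < σ₀ := lt_of_lt_of_le hσ₁ hσ
  have hd1 : (0:ℝ) < (n₁ + a₀ * n₀) ^ 2 := by positivity
  have hd2 : (0:ℝ) < (n₁ * σ₀ ^ 2 + a₀ * n₀ * σ₁ ^ 2) ^ 2 := by positivity
  have key : 4 * σ₁ ^ 2 * (n₁ + a₀ ^ 2 * n₀) / (n₁ + a₀ * n₀) ^ 2
      ≤ 4 * σ₁ ^ 2 * σ₀ ^ 2 * (n₁ * σ₀ ^ 2 + a₀ ^ 2 * n₀ * σ₁ ^ 2)
          / (n₁ * σ₀ ^ 2 + a₀ * n₀ * σ₁ ^ 2) ^ 2 := by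
    rw [div_le_div_iff₀ hd1 hd2]
    have hfac : 0 ≤ a₀ * n₀ * (σ₀ ^ 2 - σ₁ ^ 2) *
        (n₁ ^ 2 * (2 - a₀) * σ₀ ^ 2 + n₀ * n₁ * a₀ * (σ₀ ^ 2 + σ₁ ^ 2)
          + n₀ ^ 2 * a₀ ^ 3 * σ₁ ^ 2) := by
      apply mul_nonneg
      · apply mul_nonneg (by positivity)
        nlinarith
      · have h2a : (0:ℝ) < 2 - a₀ := by linarith
        have h1 : 0 < n₁ ^ 2 * (2 - a₀) * σ₀ ^ 2 :=
          mul_pos (mul_pos (pow_pos hn₁ 2) h2a) (pow_pos hσ₀ 2)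
        positivity
    nlinarith [mul_nonneg (sq_nonneg σ₁) hfac]
  exact ⟨key, fun b => le_trans key (by nlinarith [sq_nonneg (a₀ * n₀ * σ₁ * (σ₀ - σ₁) / (n₁ * σ₀ ^ 2 + a₀ * n₀ * σ₁ ^ 2) * b)])⟩
end
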